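/- arXiv:2401.16095 — 2 statements merged into one kernel-verified Lean document; each statement's English description precedes it below -/
import Mathlib

section
/- Let A be an NFA over Σ_n without ε-transitions and with state set Q, and let k = (|Q|+1)². Then there exist finitely many linear sets L_1,…,L_m ⊆ ℤ^n (each given with a representation by a base vector and a finite set of periods) such that L(A) ⊆ ⋃_{i=1}^m K^k(L_i) and Δ(L(A)) = ⋃_{i=1}^m Δ(K^k(L_i)) = ⋃_{i=1}^m L_i, where Δ is applied elementwise to languages. -/
set_option linter.unusedVariables false

/-! ### Alphabet, effects, Dyck languages -/

abbrev Sig (n : ℕ) := Fin n × Bool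

def letterEff {n : ℕ} (a : Sig n) : Fin n → ℤ :=
  fun j => if j = a.1 then (if a.2 then 1 else -1) else 0

def wordEff {n : ℕ} (w : List (Sig n)) : Fin n → ℤ :=
  (w.map letterEff).sum

/-- The Dyck language `D_n`. -/
def Dyck (n : ℕ) : Language (Sig n) :=
  {w | wordEff w = 0 ∧ ∀ u, u <+: w → ∀ j, 0 ≤ wordEff u j}

/-- The coverability Dyck language `D_n^↑`. -/
def CovDyck (n : ℕ) : Language (Sig n) :=
  {w | ∀ u, u <+: w → ∀ j, 0 ≤ wordEff u j}

/-- The `ℤ`-Dyck language `D_n^ℤ`. -/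
def ZDyck (n : ℕ) : Language (Sig n) :=
  {w | wordEff w = 0}

/-! ### VASS -/

structure VASS (A : Type) where
  Q : Type
  C : Type
  finQ : Finite Q
  finC : Finite C
  E : Set (Q × Option A × (C → ℤ) × Q)
  finE : E.Finite

inductive VASS.NRun {A : Type} (V : VASS A) :
    (V.Q × (V.C → ℕ)) → List A → (V.Q × (V.C → ℕ)) → Prop
  | refl (cfg : V.Q × (V.C → ℕ)) : VASS.NRun V cfg [] cfg
  | step {q : V.Q} {c : V.C → ℕ} {a : Option A} {d : V.C → ℤ} {q' : V.Q}
      {c' : V.C → ℕ} {w : List A} {last : V.Q × (V.C → ℕ)} :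
      (q, a, d, q') ∈ V.E →
      (∀ j, (c' j : ℤ) = (c j : ℤ) + d j) →
      VASS.NRun V (q', c') w last →
      VASS.NRun V (q, c) (a.toList ++ w) last

/-- An initialized VASS: generalized initial/final configurations,
with `none` playing the role of `ω`. -/
structure InitVASS (A : Type) extends VASS A where
  qin : Q
  qout : Q
  cin : C → Option ℕ
  cout : C → Option ℕ

/-- The reachability language of an initialized VASS. -/
def InitVASS.lang {A : Type} (V : InitVASS A) : Language A :=
  {w | ∃ c0 cl : V.C → ℕ,
      V.toVASS.NRun (V.qin, c0) w (V.qout, cl) ∧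
      (∀ j m, V.cin j = some m → c0 j = m) ∧
      (∀ j m, V.cout j = some m → cl j = m)}

/-! ### Transducers -/

structure Transducer (G A : Type) where
  Q : Type
  finQ : Finite Q
  start : Q
  accept : Set Q
  trans : Set (Q × (Option G × Option A) × Q)
  finT : trans.Finite

inductive Transducer.Path {G A : Type} (T : Transducer G A) :
    T.Q → List G → List A → T.Q → Prop
  | refl (q : T.Q) : Transducer.Path T q [] [] q
  | step {q q' qf : T.Q} {g : Option G} {a : Option A} {u : List G} {v : List A} :
      (q, (g, a), q') ∈ T.trans →
      Transducer.Path T q' u v qf →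
      Transducer.Path T q (g.toList ++ u) (a.toList ++ v) qf

/-- The relation recognized by a transducer. -/
def Transducer.rel {G A : Type} (T : Transducer G A) (u : List G) (v : List A) : Prop :=
  ∃ qf ∈ T.accept, T.Path T.start u v qf

/-- `T⁻¹(L)`. -/
def Transducer.invImage {G A : Type} (T : Transducer G A) (L : Language A) : Language G :=
  {u | ∃ v ∈ L, T.rel u v}

/-! ### Regular separability -/

def RegSep {A : Type} (L1 L2 : Language A) : Prop :=
  ∃ R : Language A, R.IsRegular ∧ L1 ≤ R ∧ ∀ w ∈ R, w ∉ L2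

/-! ### Linear sets and regular approximations -/

structure LinSet (n : ℕ) where
  base : Fin n → ℤ
  periods : Set (Fin n → ℤ)
  finP : periods.Finite

def LinSet.toSet {n : ℕ} (L : LinSet n) : Set (Fin n → ℤ) :=
  {x | ∃ p ∈ AddSubmonoid.closure L.periods, x = L.base + p}

def inBox {n : ℕ} (k : ℕ) (x : Fin n → ℤ) : Prop :=
  ∀ j, -(k : ℤ) ≤ x j ∧ x j ≤ (k : ℤ)

/-- Reachability in the ε-NFA underlying the `k`-th regular approximation of `L`:
states are vectors in `[-k,k]^n`, letters move by their effect, ε-transitions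
subtract a period. -/
inductive KReach {n : ℕ} (L : LinSet n) (k : ℕ) :
    (Fin n → ℤ) → List (Sig n) → (Fin n → ℤ) → Prop
  | refl (x : Fin n → ℤ) (h : inBox k x) : KReach L k x [] x
  | letter {x y : Fin n → ℤ} {w : List (Sig n)} (a : Sig n)
      (h : inBox k x) (h' : inBox k (x + letterEff a)) :
      KReach L k (x + letterEff a) w y → KReach L k x (a :: w) y
  | eps {x y : Fin n → ℤ} {w : List (Sig n)} {p : Fin n → ℤ}
      (hp : p ∈ L.periods) (h : inBox k x) (h' : inBox k (x - p)) :
      KReach L k (x - p) w y → KReach L k x w y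

/-- The `k`-th regular approximation `K^k(L)`. -/
def KApprox {n : ℕ} (L : LinSet n) (k : ℕ) : Language (Sig n) :=
  {w | ∃ y, KReach L k 0 w y ∧ y ∈ L.toSet}

/-! ### The `⊕⁺` operation and the families `R_ℓ` -/

def posPlus {n : ℕ} (K L : Set (Fin n → ℤ)) : Set (Fin n → ℤ) :=
  {x | (∀ j, 0 ≤ x j) ∧ ∃ a ∈ K, (∀ j, 0 ≤ a j) ∧ ∃ b ∈ L, x = a + b}

def posFoldAux {n : ℕ} : Set (Fin n → ℤ) → List (Set (Fin n → ℤ)) → Set (Fin n → ℤ)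
  | S, [] => S
  | S, L :: Ls => posFoldAux (posPlus S L) Ls

/-- `posFold [L₁, …, L_ℓ] = L₁ ⊕⁺ ⋯ ⊕⁺ L_ℓ` (associated to the left); for `ℓ = 1`
it is `L₁` itself. -/
def posFold {n : ℕ} : List (Set (Fin n → ℤ)) → Set (Fin n → ℤ)
  | [] => ∅
  | L :: Ls => posFoldAux L Ls

/-- The family `R_ℓ`. -/
def RFam (n ℓ : ℕ) : Set (Language (Sig n)) :=
  {K | ∃ (k : ℕ) (Ls : List (LinSet n)), Ls.length = ℓ ∧
      (0 : Fin n → ℤ) ∉ posFold (Ls.map LinSet.toSet) ∧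
      K = (Ls.map (fun L => KApprox L k)).prod}

/-- `R_{≤ m} = ⋃_{1 ≤ i ≤ m} R_i`. -/
def RleFam (n m : ℕ) : Set (Language (Sig n)) :=
  ⋃ i ∈ Set.Icc 1 m, RFam n i

/-- `R = ⋃_{ℓ ≥ 1} R_ℓ`. -/
def RAll (n : ℕ) : Set (Language (Sig n)) :=
  ⋃ i ∈ Set.Ici 1, RFam n i

/-! ### Basic separator sets -/

def IsBasicSepSet {n : ℕ} (S : Language (Sig n)) (B : Set (Language (Sig n))) : Prop :=
  (∀ K ∈ B, K.IsRegular ∧ ∀ w ∈ K, w ∉ S) ∧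
  (∀ L : Language (Sig n), L.IsRegular → (∀ w ∈ L, w ∉ S) →
    ∃ F ⊆ B, F.Finite ∧ ∀ w ∈ L, ∃ K ∈ F, w ∈ K)

/-! Extra defs for specific statements -/

/-- `u ∼_A v`: the words induce the same state transformation in the DFA `M`. -/
def simEq {α σ : Type} (M : DFA α σ) (u v : List α) : Prop :=
  ∀ p : σ, M.evalFrom p u = M.evalFrom p v

/-- Assemble `w₀ m₁ w₁ ⋯ m_k w_k` over `Σ ⊎ Σ#` (`Sum.inl` = plain, `Sum.inr` = marked). -/
def assemble {α : Type} : List (List α) → List α → List (α ⊕ α)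
  | [], _ => []
  | w :: _, [] => w.map Sum.inl
  | w :: ws, m :: ms => w.map Sum.inl ++ Sum.inr m :: assemble ws ms

/-- The set of effects of a language. -/
def effSet {n : ℕ} (L : Language (Sig n)) : Set (Fin n → ℤ) :=
  {v | ∃ w ∈ L, wordEff w = v}

/-- `Mod(μ, v)`. -/
def ModLang (n μ : ℕ) (v : Fin n → ℤ) : Language (Sig n) :=
  {w | ∀ j, wordEff w j ≡ v j [ZMOD (μ : ℤ)]}

/-- `ModSet(μ, v)`: base `v`, periods `{±μ·e_i}`. -/
def ModSet (n μ : ℕ) (v : Fin n → ℤ) : LinSet n where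
  base := v
  periods := (Set.range fun i : Fin n => (μ : ℤ) • Pi.single i (1 : ℤ)) ∪
    (Set.range fun i : Fin n => -((μ : ℤ) • Pi.single i (1 : ℤ)))
  finP := (Set.finite_range _).union (Set.finite_range _)

/-- `Cov(k, i)`. -/
def CovLang (n k : ℕ) (i : Fin n) : Language (Sig n) :=
  {x | ∃ w w', x = w ++ w' ∧ wordEff w i < 0 ∧
      ∀ u, u <+: w → u ≠ w → 0 ≤ wordEff u i ∧ wordEff u i ≤ (k : ℤ)}

/-- `L_{neg,i}`: base `-e_i`, periods `{±e_j : j ≠ i}`. -/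
def LNeg (n : ℕ) (i : Fin n) : LinSet n where
  base := -Pi.single i 1
  periods := ((fun j : Fin n => Pi.single j (1 : ℤ)) '' {j | j ≠ i}) ∪
    ((fun j : Fin n => -Pi.single j (1 : ℤ)) '' {j | j ≠ i})
  finP := ((Set.toFinite _).image _).union ((Set.toFinite _).image _)

/-- `Z`: base `0`, periods `{±e_j}`. -/
def ZSet (n : ℕ) : LinSet n where
  base := 0
  periods := (Set.range fun j : Fin n => Pi.single j (1 : ℤ)) ∪
    (Set.range fun j : Fin n => -Pi.single j (1 : ℤ))
  finP := (Set.finite_range _).union (Set.finite_range _)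

/-! The language `C_ℓ` over `Σ₂` -/

def ltrA1 : Sig 2 := (0, true)
def ltrA2 : Sig 2 := (1, true)
def ltrB1 : Sig 2 := (0, false)
def ltrB2 : Sig 2 := (1, false)

def fwdWord (j : ℕ) : List (Sig 2) := ltrA1 :: List.replicate j ltrA2
def bwdWord (j : ℕ) : List (Sig 2) := ltrB1 :: List.replicate j ltrB2

def segLang (j : ℕ) : Language (Sig 2) :=
  KStar.kstar ({fwdWord j, bwdWord j} : Language (Sig 2))

def aPlusLang : Language (Sig 2) :=
  {w | ∃ m : ℕ, 0 < m ∧ w = List.replicate m ltrA1}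

def CLang (ℓ : ℕ) : Language (Sig 2) :=
  aPlusLang * ((List.range ℓ).map (fun j => segLang (j + 1))).prod


/-!
A word accepted by `M` is read by the approximating automaton while a stack holds the current
loop-free prefix of its run. Whenever the run revisits a state of the stack, the cycle just closed
(of length at most `|Q|`) is popped. If its states already occur in the base run built for the rest
of the word, its effect is subtracted by an ε-transition (it is a period); otherwise the cycle is
kept in the base run, which then visits a new state. So at most `|Q|` cycles are kept, and the
counter, i.e. the effect of the stack plus that of the kept cycles, stays in `[-|Q|², |Q|²]ⁿ`.
Conversely, every cycle of length at most `|Q|` at a state of the base run can be inserted into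
it, so the linear set with that base and these periods consists of effects of accepted words.
-/

section Effects

variable {n : ℕ}

@[simp]
lemma wordEff_nil : wordEff ([] : List (Sig n)) = 0 := rfl

@[simp]
lemma wordEff_cons (a : Sig n) (w : List (Sig n)) :
    wordEff (a :: w) = letterEff a + wordEff w := by
  simp [wordEff]

@[simp]
lemma wordEff_append (u v : List (Sig n)) : wordEff (u ++ v) = wordEff u + wordEff v := by
  simp [wordEff]

lemma wordEff_eq_of_perm {u v : List (Sig n)} (h : u.Perm v) : wordEff u = wordEff v :=
  (h.map letterEff).sum_eq

lemma abs_letterEff_apply_le (a : Sig n) (j : Fin n) : |letterEff a j| ≤ 1 := by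
  unfold letterEff
  split_ifs <;> simp

lemma abs_wordEff_apply_le (w : List (Sig n)) (j : Fin n) : |wordEff w j| ≤ w.length := by
  induction w with
  | nil => simp
  | cons a w ih =>
    calc |letterEff a j + wordEff w j| ≤ |letterEff a j| + |wordEff w j| := abs_add_le _ _
      _ ≤ ((a :: w).length : ℤ) := by
        push_cast [List.length_cons]
        linarith [abs_letterEff_apply_le a j]

lemma inBox.add_wordEff {m k : ℕ} {d : Fin n → ℤ} (hd : inBox m d) (w : List (Sig n))
    (h : m + w.length ≤ k) : inBox k (d + wordEff w) := by
  intro j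
  have hw := abs_le.mp (abs_wordEff_apply_le w j)
  have hk : (m : ℤ) + w.length ≤ k := by exact_mod_cast h
  simp only [Pi.add_apply]
  constructor <;> linarith [hd j]

lemma finite_setOf_inBox (k : ℕ) : {x : Fin n → ℤ | inBox k x}.Finite :=
  (Set.finite_Icc (fun _ => -(k : ℤ)) fun _ => (k : ℤ)).subset
    fun _ hx => ⟨fun j => (hx j).1, fun j => (hx j).2⟩

end Effects

section Approximation

variable {n : ℕ} {L : LinSet n} {k : ℕ} {x y : Fin n → ℤ} {w : List (Sig n)}

lemma KReach.mono_periods {L' : LinSet n} (h : KReach L k x w y)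
    (hP : L.periods ⊆ L'.periods) : KReach L' k x w y := by
  induction h with
  | refl x hx => exact .refl x hx
  | letter a hx hx' _ ih => exact .letter a hx hx' ih
  | eps hp hx hx' _ ih => exact .eps (hP hp) hx hx' ih

lemma KReach.inBox_right (h : KReach L k x w y) : inBox k y := by
  induction h with
  | refl x hx => exact hx
  | letter _ _ _ _ ih => exact ih
  | eps _ _ _ _ ih => exact ih

lemma KReach.exists_add_wordEff_eq (h : KReach L k x w y) :
    ∃ p ∈ AddSubmonoid.closure L.periods, x + wordEff w = y + p := by
  induction h with
  | refl x _ => exact ⟨0, zero_mem _, by simp⟩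
  | @letter x y w a _ _ _ ih =>
    obtain ⟨p, hp, he⟩ := ih
    exact ⟨p, hp, by rw [wordEff_cons, ← he]; abel⟩
  | @eps x y w p₀ hp₀ _ _ _ ih =>
    obtain ⟨p, hp, he⟩ := ih
    refine ⟨p + p₀, add_mem hp (AddSubmonoid.subset_closure hp₀), ?_⟩
    rw [← add_assoc, ← he]
    abel

lemma effSet_KApprox_subset (L : LinSet n) (k : ℕ) : effSet (KApprox L k) ⊆ L.toSet := by
  rintro _ ⟨w, ⟨y, hy, p, hp, rfl⟩, rfl⟩
  obtain ⟨p', hp', he⟩ := hy.exists_add_wordEff_eq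
  refine ⟨p + p', add_mem hp hp', ?_⟩
  rw [← add_assoc, ← he, zero_add]

lemma effSet_eq_of_subset_KApprox {A : Language (Sig n)} {Ls : List (LinSet n)}
    (hcover : ∀ w ∈ A, ∃ L ∈ Ls, w ∈ KApprox L k) (hsound : ∀ L ∈ Ls, L.toSet ⊆ effSet A) :
    effSet A = ⋃ L ∈ Ls, effSet (KApprox L k) ∧ effSet A = ⋃ L ∈ Ls, L.toSet := by
  have hA : effSet A ⊆ ⋃ L ∈ Ls, effSet (KApprox L k) := by
    rintro _ ⟨w, hw, rfl⟩
    obtain ⟨L, hL, hwL⟩ := hcover w hw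
    exact Set.mem_biUnion hL ⟨w, hwL, rfl⟩
  have hL : ⋃ L ∈ Ls, L.toSet ⊆ effSet A := Set.iUnion₂_subset hsound
  have hKL : ⋃ L ∈ Ls, effSet (KApprox L k) ⊆ ⋃ L ∈ Ls, L.toSet :=
    Set.biUnion_mono subset_rfl fun L _ => effSet_KApprox_subset L k
  exact ⟨hA.antisymm (hKL.trans hL), (hA.trans hKL).antisymm hL⟩

end Approximation

lemma card_le_card_mul_ncard {σ : Type*} [Fintype σ] (s : Set σ) (q : σ) :
    Fintype.card σ ≤ Fintype.card σ * (s ∪ {q}).ncard :=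
  Nat.le_mul_of_pos_right _ ((Set.ncard_pos (Set.toFinite _)).mpr ⟨q, Or.inr rfl⟩)

namespace NFA

section Runs

variable {α σ : Type*} {M : NFA α σ}

/-- A run as the list of its transitions `(source, letter)`. -/
def IsRun (M : NFA α σ) : σ → List (σ × α) → σ → Prop
  | q, [], q' => q = q'
  | q, e :: t, q' => e.1 = q ∧ ∃ r ∈ M.step q e.2, M.IsRun r t q'

/-- The target of the run is not included. -/
def sources (t : List (σ × α)) : Set σ := {q | q ∈ t.map Prod.fst}

@[simp]
lemma sources_nil : sources ([] : List (σ × α)) = ∅ := by simp [sources]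

@[simp]
lemma sources_cons (e : σ × α) (t : List (σ × α)) :
    sources (e :: t) = insert e.1 (sources t) := by
  ext; simp [sources]

@[simp]
lemma sources_append (t t' : List (σ × α)) : sources (t ++ t') = sources t ∪ sources t' := by
  ext; simp [sources]

lemma IsRun.append {q r q' : σ} {t t' : List (σ × α)} (h : M.IsRun q t r)
    (h' : M.IsRun r t' q') : M.IsRun q (t ++ t') q' := by
  induction t generalizing q with
  | nil => exact (show q = r from h) ▸ h'
  | cons e t ih =>
    obtain ⟨he, s, hs, ht⟩ := h
    exact ⟨he, s, hs, ih ht⟩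

lemma IsRun.exists_of_append {q q' : σ} {t t' : List (σ × α)} (h : M.IsRun q (t ++ t') q') :
    ∃ r, M.IsRun q t r ∧ M.IsRun r t' q' := by
  induction t generalizing q with
  | nil => exact ⟨q, rfl, h⟩
  | cons e t ih =>
    obtain ⟨he, s, hs, ht⟩ := h
    obtain ⟨r, h₁, h₂⟩ := ih ht
    exact ⟨r, ⟨he, s, hs, h₁⟩, h₂⟩

lemma IsRun.snoc {q r s : σ} {t : List (σ × α)} {a : α} (h : M.IsRun q t r)
    (hs : s ∈ M.step r a) : M.IsRun q (t ++ [(r, a)]) s :=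
  h.append ⟨rfl, s, hs, rfl⟩

lemma IsRun.start_mem {q q' : σ} {t : List (σ × α)} (h : M.IsRun q t q') :
    q ∈ sources t ∪ {q'} := by
  cases t with
  | nil => exact Or.inr h
  | cons e t => exact Or.inl (by rw [sources_cons, ← h.1]; exact Set.mem_insert _ _)

lemma mem_evalFrom_singleton_iff {q q' : σ} {w : List α} :
    q' ∈ M.evalFrom {q} w ↔ ∃ t, M.IsRun q t q' ∧ t.map Prod.snd = w := by
  induction w generalizing q with
  | nil =>
    refine ⟨fun h => ⟨[], (Set.mem_singleton_iff.mp h).symm, rfl⟩, ?_⟩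
    rintro ⟨_ | _, h, hw⟩
    · exact Set.mem_singleton_iff.mpr h.symm
    · simp at hw
  | cons a w ih =>
    rw [evalFrom_cons, stepSet_singleton, mem_evalFrom_iff_exists]
    simp only [ih]
    constructor
    · rintro ⟨r, hr, t, ht, rfl⟩
      exact ⟨(q, a) :: t, ⟨rfl, r, hr, ht⟩, rfl⟩
    · rintro ⟨_ | ⟨⟨p, b⟩, t⟩, ht, hw⟩
      · simp at hw
      · obtain ⟨rfl, r, hr, ht⟩ := ht
        obtain ⟨rfl, rfl⟩ := List.cons.inj hw
        exact ⟨r, hr, t, ht, rfl⟩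

lemma mem_accepts_iff_exists_isRun {w : List α} :
    w ∈ M.accepts ↔
      ∃ q ∈ M.start, ∃ q' ∈ M.accept, ∃ t, M.IsRun q t q' ∧ t.map Prod.snd = w := by
  simp only [mem_accepts, mem_evalFrom_iff_exists (S := M.start), mem_evalFrom_singleton_iff]
  tauto

lemma IsRun.exists_insert_cycle {q q' r : σ} {t c : List (σ × α)} (ht : M.IsRun q t q')
    (hr : r ∈ sources t ∪ {q'}) (hc : M.IsRun r c r) :
    ∃ t', M.IsRun q t' q' ∧ sources t' = sources t ∪ sources c ∧ t'.Perm (t ++ c) := by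
  rcases hr with hr | rfl
  · obtain ⟨e, he, rfl⟩ := List.mem_map.mp hr
    obtain ⟨t₁, t₂, rfl⟩ := List.append_of_mem he
    obtain ⟨s, h₁, h₂⟩ := ht.exists_of_append
    obtain rfl : s = e.1 := h₂.1.symm
    refine ⟨t₁ ++ c ++ e :: t₂, by simpa using h₁.append (hc.append h₂), ?_, ?_⟩
    · simp only [sources_append, sources_cons]
      ext; simp only [Set.mem_union, Set.mem_insert_iff]; tauto
    · simpa using (List.perm_append_comm (l₁ := c) (l₂ := e :: t₂)).append_left t₁
  · exact ⟨t ++ c, ht.append hc, sources_append t c, .refl _⟩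

lemma IsRun.exists_cycle {q r : σ} {t : List (σ × α)} (h : M.IsRun q t r)
    (hr : r ∈ t.map Prod.fst) (hnd : (t.map Prod.fst).Nodup) :
    ∃ t₁ c, t = t₁ ++ c ∧ M.IsRun q t₁ r ∧ M.IsRun r c r ∧ (t₁.map Prod.fst ++ [r]).Nodup := by
  obtain ⟨e, he, rfl⟩ := List.mem_map.mp hr
  obtain ⟨t₁, t₂, rfl⟩ := List.append_of_mem he
  obtain ⟨s, h₁, h₂⟩ := h.exists_of_append
  obtain rfl : s = e.1 := h₂.1.symm
  refine ⟨t₁, e :: t₂, rfl, h₁, h₂, hnd.sublist ?_⟩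
  simp [(List.nil_sublist _).cons_cons e.1]

end Runs

section Cycles

variable {n : ℕ} {σ : Type*} [Fintype σ] (M : NFA (Sig n) σ)

def cycleEffects (S : Set σ) : Set (Fin n → ℤ) :=
  {v | ∃ q ∈ S, ∃ c, M.IsRun q c q ∧ c.length ≤ Fintype.card σ ∧ wordEff (c.map Prod.snd) = v}

lemma cycleEffects_finite (S : Set σ) : (M.cycleEffects S).Finite :=
  (finite_setOf_inBox (Fintype.card σ)).subset <| by
    rintro _ ⟨q, -, c, -, hc, rfl⟩
    simpa using (show inBox 0 (0 : Fin n → ℤ) from fun _ => by simp).add_wordEff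
      (c.map Prod.snd) (by simpa using hc)

def cycleLinSet (b : Fin n → ℤ) (S : Set σ) : LinSet n :=
  ⟨b, M.cycleEffects S, M.cycleEffects_finite S⟩

variable {M} {S : Set σ} {q q' : σ}

lemma exists_isRun_wordEff_eq_add {p : Fin n → ℤ}
    (hp : p ∈ AddSubmonoid.closure (M.cycleEffects S)) {u : List (σ × Sig n)}
    (hu : M.IsRun q u q') (hS : S ⊆ sources u ∪ {q'}) :
    ∃ u', M.IsRun q u' q' ∧ S ⊆ sources u' ∪ {q'} ∧
      wordEff (u'.map Prod.snd) = wordEff (u.map Prod.snd) + p := by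
  induction hp using AddSubmonoid.closure_induction generalizing u with
  | mem v hv =>
    obtain ⟨r, hr, c, hc, -, rfl⟩ := hv
    obtain ⟨u', hu', hsrc, hperm⟩ := hu.exists_insert_cycle (hS hr) hc
    refine ⟨u', hu', ?_, by simpa using wordEff_eq_of_perm (hperm.map Prod.snd)⟩
    rw [hsrc, Set.union_right_comm]
    exact hS.trans Set.subset_union_left
  | zero => exact ⟨u, hu, hS, by simp⟩
  | add v v' _ _ ih ih' =>
    obtain ⟨u₁, hu₁, hS₁, he₁⟩ := ih hu hS
    obtain ⟨u₂, hu₂, hS₂, he₂⟩ := ih' hu₁ hS₁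
    exact ⟨u₂, hu₂, hS₂, by rw [he₂, he₁, add_assoc]⟩

lemma toSet_cycleLinSet_subset {u : List (σ × Sig n)} (hq : q ∈ M.start) (hq' : q' ∈ M.accept)
    (hu : M.IsRun q u q') (hS : S ⊆ sources u ∪ {q'}) :
    (M.cycleLinSet (wordEff (u.map Prod.snd)) S).toSet ⊆ effSet M.accepts := by
  rintro _ ⟨p, hp, rfl⟩
  obtain ⟨u', hu', -, he⟩ := exists_isRun_wordEff_eq_add hp hu hS
  exact ⟨_, mem_accepts_iff_exists_isRun.mpr ⟨q, hq, q', hq', u', hu', rfl⟩, he⟩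

end Cycles

section BaseRun

variable {n : ℕ} {σ : Type*} [Fintype σ]

/-- The invariant of the stack-based reading of a run of `M` to `qf`: `st` is the stack (a
loop-free run from `q₀`), `t` the rest of the run and `u` the base run being built. The vector `d`
is the effect of the cycles already moved into the base run; the counter needs room `|Q|` per state
of `u`. -/
def IsBaseRun (M : NFA (Sig n) σ) (L : LinSet n) (k : ℕ) (q₀ qf : σ)
    (st t u : List (σ × Sig n)) : Prop :=
  M.IsRun q₀ u qf ∧ sources st ∪ sources t ⊆ sources u ∪ {qf} ∧
    ∀ (d : Fin n → ℤ) (m : ℕ), inBox m d → m + Fintype.card σ * (sources u ∪ {qf}).ncard ≤ k →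
      KReach L k (d + wordEff (st.map Prod.snd)) (t.map Prod.snd) (d + wordEff (u.map Prod.snd))

variable {M : NFA (Sig n) σ} {L : LinSet n} {k : ℕ} {q₀ qf : σ} {st t u c : List (σ × Sig n)}

lemma IsBaseRun.cons {q : σ} {a : Sig n} (hst : st.length < Fintype.card σ)
    (h : IsBaseRun M L k q₀ qf (st ++ [(q, a)]) t u) :
    IsBaseRun M L k q₀ qf st ((q, a) :: t) u := by
  obtain ⟨hu, hsrc, hK⟩ := h
  refine ⟨hu, by simpa [Set.union_insert, Set.insert_union] using hsrc, fun d m hd hm => ?_⟩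
  have hQ := card_le_card_mul_ncard (sources u) qf
  have hpos : d + wordEff (st.map Prod.snd) + letterEff a =
      d + wordEff ((st ++ [(q, a)]).map Prod.snd) := by
    simp [add_assoc]
  refine .letter a (hd.add_wordEff _ (by simp; omega)) ?_ (hpos ▸ hK d m hd hm)
  exact hpos ▸ hd.add_wordEff _ (by simp; omega)

lemma IsBaseRun.append_cycle (hlen : (st ++ c).length ≤ Fintype.card σ)
    (hc : wordEff (c.map Prod.snd) ∈ L.periods) (hsub : sources c ⊆ sources u ∪ {qf})
    (h : IsBaseRun M L k q₀ qf st t u) : IsBaseRun M L k q₀ qf (st ++ c) t u := by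
  obtain ⟨hu, hsrc, hK⟩ := h
  refine ⟨hu, ?_, fun d m hd hm => ?_⟩
  · rw [sources_append, Set.union_right_comm]
    exact Set.union_subset hsrc hsub
  have hQ := card_le_card_mul_ncard (sources u) qf
  have hpos : d + wordEff ((st ++ c).map Prod.snd) - wordEff (c.map Prod.snd) =
      d + wordEff (st.map Prod.snd) := by
    rw [List.map_append, wordEff_append]
    abel
  simp only [List.length_append] at hlen
  refine .eps hc (hd.add_wordEff _ (by simp; omega)) ?_ (hpos ▸ hK d m hd hm)
  exact hpos ▸ hd.add_wordEff _ (by simp; omega)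

lemma IsBaseRun.exists_append_cycle {r : σ} (ht : M.IsRun r t qf) (hc : M.IsRun r c r)
    (hlen : c.length ≤ Fintype.card σ) (hnew : ¬ sources c ⊆ sources u ∪ {qf})
    (h : IsBaseRun M L k q₀ qf st t u) : ∃ u', IsBaseRun M L k q₀ qf (st ++ c) t u' := by
  obtain ⟨hu, hsrc, hK⟩ := h
  have hr : r ∈ sources u ∪ {qf} := ht.start_mem.elim (fun h => hsrc (Or.inr h)) Or.inr
  obtain ⟨u', hu', hsrc', hperm⟩ := hu.exists_insert_cycle hr hc
  have hsub : sources u ∪ {qf} ⊆ sources u' ∪ {qf} := by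
    rw [hsrc', Set.union_right_comm]
    exact Set.subset_union_left
  have hgrow : (sources u ∪ {qf}).ncard < (sources u' ∪ {qf}).ncard := by
    refine Set.ncard_lt_ncard (hsub.ssubset_of_not_subset fun hsup => hnew ?_)
    rw [hsrc', Set.union_right_comm] at hsup
    exact Set.subset_union_right.trans hsup
  refine ⟨u', hu', ?_, fun d m hd hm => ?_⟩
  · rw [sources_append, Set.union_right_comm]
    refine Set.union_subset (hsrc.trans hsub) ?_
    rw [hsrc', Set.union_right_comm]
    exact Set.subset_union_right
  have hroom : m + Fintype.card σ + Fintype.card σ * (sources u ∪ {qf}).ncard ≤ k := by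
    nlinarith
  have hrun := hK _ _ (hd.add_wordEff (c.map Prod.snd) (by simpa using hlen)) hroom
  have heff : wordEff (u'.map Prod.snd) = wordEff (u.map Prod.snd) + wordEff (c.map Prod.snd) := by
    simpa using wordEff_eq_of_perm (hperm.map Prod.snd)
  convert hrun using 1 <;> simp only [heff, List.map_append, wordEff_append] <;> abel

theorem exists_isBaseRun {S : Set σ} (hqf : qf ∈ S) (hP : M.cycleEffects S ⊆ L.periods)
    {cur : σ} (ht : M.IsRun cur t qf) (hst : M.IsRun q₀ st cur)
    (hnd : (st.map Prod.fst ++ [cur]).Nodup) (hS : sources st ∪ sources t ⊆ S) :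
    ∃ u, IsBaseRun M L k q₀ qf st t u := by
  induction t generalizing cur st with
  | nil =>
    obtain rfl : cur = qf := ht
    refine ⟨st, hst, by simp, fun d m hd hm => .refl _ (hd.add_wordEff _ ?_)⟩
    have hlen := hnd.length_le_card
    have hQ := card_le_card_mul_ncard (sources st) cur
    simp only [List.length_append, List.length_map, List.length_singleton] at hlen
    simp only [List.length_map]
    omega
  | cons e t ih =>
    obtain ⟨q, a⟩ := e
    obtain ⟨rfl, r, hr, ht⟩ := ht
    have hst₂ := hst.snoc hr
    have hnd₂ : ((st ++ [(q, a)]).map Prod.fst).Nodup := by simpa using hnd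
    have hS₂ : sources (st ++ [(q, a)]) ∪ sources t ⊆ S := by
      simpa [Set.union_insert, Set.insert_union] using hS
    have hrS : r ∈ S := ht.start_mem.elim (fun h => hS₂ (Or.inr h)) fun h => h ▸ hqf
    have hlen : st.length < Fintype.card σ := by simpa using hnd.length_le_card
    refine (?_ : ∃ u, IsBaseRun M L k q₀ qf (st ++ [(q, a)]) t u).imp fun u => IsBaseRun.cons hlen
    by_cases hrep : r ∈ (st ++ [(q, a)]).map Prod.fst
    · obtain ⟨stA, c, hsplit, hA, hc, hndA⟩ := hst₂.exists_cycle hrep hnd₂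
      have hlen₂ : (stA ++ c).length ≤ Fintype.card σ := by
        simpa [hsplit] using hnd₂.length_le_card
      rw [hsplit, sources_append] at hS₂
      obtain ⟨u, hu⟩ := ih ht hA hndA (by simpa [Set.union_right_comm] using
        (Set.union_subset_union_left _ Set.subset_union_left).trans hS₂)
      rw [hsplit]
      by_cases hsub : sources c ⊆ sources u ∪ {qf}
      · have hcP : wordEff (c.map Prod.snd) ∈ M.cycleEffects S :=
          ⟨r, hrS, c, hc, by simp only [List.length_append] at hlen₂; omega, rfl⟩
        exact ⟨u, hu.append_cycle hlen₂ (hP hcP) hsub⟩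
      · exact hu.exists_append_cycle ht hc (by simp only [List.length_append] at hlen₂; omega) hsub
    · exact ih ht hst₂ (List.nodup_append_comm.mpr (List.nodup_cons.mpr ⟨hrep, hnd₂⟩)) hS₂

theorem exists_mem_KApprox_cycleLinSet (hk : Fintype.card σ ^ 2 ≤ k) {w : List (Sig n)}
    (hw : w ∈ M.accepts) :
    ∃ q ∈ M.start, ∃ qf ∈ M.accept, ∃ u S, M.IsRun q u qf ∧ S ⊆ sources u ∪ {qf} ∧
      inBox k (wordEff (u.map Prod.snd)) ∧
      w ∈ KApprox (M.cycleLinSet (wordEff (u.map Prod.snd)) S) k := by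
  obtain ⟨q, hq, qf, hqf, t, ht, rfl⟩ := mem_accepts_iff_exists_isRun.mp hw
  obtain ⟨u, hu, hsrc, hK⟩ := exists_isBaseRun (S := sources t ∪ {qf})
    (L := M.cycleLinSet 0 (sources t ∪ {qf})) (k := k) (st := []) (Or.inr rfl) subset_rfl ht rfl
    (by simp) (by simp)
  have hroom : 0 + Fintype.card σ * (sources u ∪ {qf}).ncard ≤ k := by
    have := Set.ncard_le_card (sources u ∪ {qf})
    rw [Nat.card_eq_fintype_card] at this
    nlinarith
  have hrun : KReach (M.cycleLinSet (wordEff (u.map Prod.snd)) (sources t ∪ {qf})) k 0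
      (t.map Prod.snd) (wordEff (u.map Prod.snd)) := by
    have h0 := hK 0 0 (fun _ => by simp) hroom
    simp only [List.map_nil, wordEff_nil, zero_add] at h0
    exact h0.mono_periods subset_rfl
  refine ⟨q, hq, qf, hqf, u, _, hu, ?_, hrun.inBox_right, _, hrun, 0, zero_mem _, (add_zero _).symm⟩
  exact Set.union_subset (by simpa using hsrc) Set.subset_union_right

end BaseRun

end NFA

theorem stmt5 {n : ℕ} {σ : Type} [Fintype σ] (M : NFA (Sig n) σ) :
    ∃ Ls : List (LinSet n),
      (∀ w ∈ M.accepts, ∃ L ∈ Ls, w ∈ KApprox L ((Fintype.card σ + 1) ^ 2)) ∧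
      effSet M.accepts = ⋃ L ∈ Ls, effSet (KApprox L ((Fintype.card σ + 1) ^ 2)) ∧
      effSet M.accepts = ⋃ L ∈ Ls, L.toSet := by
  set k := (Fintype.card σ + 1) ^ 2
  set B : Set ((Fin n → ℤ) × Set σ) := {p | inBox k p.1 ∧ ∃ q ∈ M.start, ∃ qf ∈ M.accept,
    ∃ u, M.IsRun q u qf ∧ p.2 ⊆ NFA.sources u ∪ {qf} ∧ wordEff (u.map Prod.snd) = p.1}
  have hB : B.Finite :=
    ((finite_setOf_inBox k).prod Set.finite_univ).subset fun p hp => ⟨hp.1, trivial⟩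
  set Ls := hB.toFinset.toList.map fun p => M.cycleLinSet p.1 p.2
  have hcover : ∀ w ∈ M.accepts, ∃ L ∈ Ls, w ∈ KApprox L k := by
    intro w hw
    obtain ⟨q, hq, qf, hqf, u, S, hu, hS, hbox, hwK⟩ :=
      NFA.exists_mem_KApprox_cycleLinSet (k := k) (Nat.pow_le_pow_left (Nat.le_succ _) 2) hw
    refine ⟨_, List.mem_map.mpr ⟨(wordEff (u.map Prod.snd), S), ?_, rfl⟩, hwK⟩
    simp only [Finset.mem_toList, Set.Finite.mem_toFinset]
    exact ⟨hbox, q, hq, qf, hqf, u, hu, hS, rfl⟩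
  have hsound : ∀ L ∈ Ls, L.toSet ⊆ effSet M.accepts := by
    simp only [Ls, B, List.mem_map, Finset.mem_toList, Set.Finite.mem_toFinset]
    rintro _ ⟨⟨_, S⟩, ⟨-, q, hq, qf, hqf, u, hu, hS, rfl⟩, rfl⟩
    exact NFA.toSet_cycleLinSet_subset hq hqf hu hS
  exact ⟨Ls, hcover, effSet_eq_of_subset_KApprox hcover hsound⟩
end

section
/- For every ℓ ≥ 1 and every word w ∈ C_ℓ such that Δ(u) ≥ 0 componentwise for every prefix u of w, one has ℓ·Δ(w)(1) ≥ Δ(w)(2) + ℓ. -/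
set_option linter.unusedVariables false

/-!
Write `w = a₁^m s₁ ⋯ s_ℓ` with `s_j ∈ {a₁a₂^j, ā₁ā₂^j}^*`, and let `(x_j, y_j)` be the effect of
`a₁^m s₁ ⋯ s_j`. Each `s_j` has effect on the line `y = j x`, so `y_j = y_{j-1} + j (x_j - x_{j-1})`.
By induction `y_j + j ≤ j x_j` and `x_j ≥ 1`: the step from `j - 1` to `j` uses `x_{j-1} ≥ 1`, and
then `x_j ≥ 1` follows from `y_j ≥ 0`, which is the prefix condition on the second counter.
-/

section WordEff

variable {n : ℕ}

@[simp]
lemma wordEff_replicate (m : ℕ) (a : Sig n) :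
    wordEff (List.replicate m a) = m • letterEff a := by
  simp [wordEff, List.map_replicate]

end WordEff

lemma wordEff_one_eq_of_mem_segLang {k : ℕ} {v : List (Sig 2)} (hv : v ∈ segLang k) :
    wordEff v 1 = k * wordEff v 0 := by
  obtain ⟨S, rfl, hS⟩ := Language.mem_kstar.mp hv
  induction S with
  | nil => simp
  | cons u S ih =>
    have hu : wordEff u 1 = k * wordEff u 0 := by
      rcases hS u List.mem_cons_self with rfl | rfl <;>
        simp [fwdWord, bwdWord, letterEff, ltrA1, ltrA2, ltrB1, ltrB2]
    have hS' : ∀ u ∈ S, u ∈ ({fwdWord k, bwdWord k} : Language (Sig 2)) :=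
      fun u h => hS u (List.mem_cons_of_mem _ h)
    simp only [List.flatten_cons, wordEff_append, Pi.add_apply, mul_add, hu,
      ih hS' (Language.mem_kstar.mpr ⟨S, rfl, hS'⟩)]

lemma wordEff_of_mem_aPlusLang {w : List (Sig 2)} (hw : w ∈ aPlusLang) :
    wordEff w 1 = 0 ∧ 1 ≤ wordEff w 0 := by
  obtain ⟨m, hm, rfl⟩ := hw
  simp [letterEff, ltrA1]
  omega

lemma CLang_succ (ℓ : ℕ) : CLang (ℓ + 1) = CLang ℓ * segLang (ℓ + 1) := by
  simp [CLang, List.range_succ, mul_assoc]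

lemma wordEff_bound_of_mem_CLang {ℓ : ℕ} {w : List (Sig 2)} (hw : w ∈ CLang ℓ)
    (hpos : ∀ u, u <+: w → 0 ≤ wordEff u 1) :
    wordEff w 1 + ℓ ≤ ℓ * wordEff w 0 ∧ 1 ≤ wordEff w 0 := by
  induction ℓ generalizing w with
  | zero =>
    obtain ⟨h1, h0⟩ := wordEff_of_mem_aPlusLang (by simpa [CLang] using hw)
    simp [h1, h0]
  | succ k ih =>
    rw [CLang_succ] at hw
    obtain ⟨u, hu, v, hv, rfl⟩ := hw
    obtain ⟨hbound, hx⟩ := ih hu fun u' hu' => hpos u' (hu'.trans (List.prefix_append u v))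
    have hslope := wordEff_one_eq_of_mem_segLang hv
    have hy := hpos _ (List.prefix_refl _)
    simp only [wordEff_append, Pi.add_apply] at hy ⊢
    push_cast at hslope ⊢
    constructor <;> nlinarith

theorem stmt15_general (ℓ : ℕ) (w : List (Sig 2)) (hw : w ∈ CLang ℓ)
    (hpos : ∀ u, u <+: w → ∀ j, 0 ≤ wordEff u j) :
    (ℓ : ℤ) * wordEff w 0 ≥ wordEff w 1 + (ℓ : ℤ) :=
  (wordEff_bound_of_mem_CLang hw fun u hu => hpos u hu 1).1

theorem stmt15 (ℓ : ℕ) (hl : 1 ≤ ℓ) (w : List (Sig 2)) (hw : w ∈ CLang ℓ)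
    (hpos : ∀ u, u <+: w → ∀ j, 0 ≤ wordEff u j) :
    (ℓ : ℤ) * wordEff w 0 ≥ wordEff w 1 + (ℓ : ℤ) :=
  stmt15_general ℓ w hw hpos
end
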